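/- For every integer m ≥ 1, the identity ∂_i^m(L_m) = (1 − b)^m·(m)_a!·x_j holds in T, where (t)_a = 1 + a + ⋯ + a^{t−1} and (m)_a! = ∏_{t=1}^m (t)_a. -/

import Mathlib

/-!
Write `∂ = ∂_i` and `χ(d) = ∏_k q_{ik}^{-d_k}`. On words, `∂` lowers the `x_i`-degree by one and
kills every word without `x_i`; hence it maps homogeneous elements of degree `d` to degree
`d - e_i`, and `∂^{t+1} v = 0` when `v` has degree `t e_i + e_j`. For `v` homogeneous of degree `d`
the twisted Leibniz rule gives
`∂(α x_i v - v x_i) = (α - χ(d)) v + (α a x_i ∂v - ∂v x_i)`.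
Iterating this `t + 1` times on `v = L_t`, of degree `t e_i + e_j`
(so that `χ(deg ∂^s L_t) = a^{t-s} b`), the last commutator vanishes and
`∂^{t+1} L_{t+1} = ∑_{s ≤ t} (a^s - a^{t-s} b) ∂^t L_t = (1 - b) (t+1)_a ∂^t L_t`.
-/

noncomputable section

/-- The `ℤⁿ`-degree of a word: the multidegree counting occurrences of each letter. -/
def degw {n : ℕ} (w : FreeMonoid (Fin n)) : Fin n → ℕ :=
  fun k => (FreeMonoid.toList w).count k

/-- The word `u` viewed as an element of the free algebra `T = F⟨x_1,…,x_n⟩`,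
realized as the monoid algebra of the free monoid on `n` letters. -/
def wordOf (F : Type) [Field F] {n : ℕ} (u : FreeMonoid (Fin n)) :
    MonoidAlgebra F (FreeMonoid (Fin n)) :=
  MonoidAlgebra.of F (FreeMonoid (Fin n)) u

/-- `x` is `ℤⁿ`-homogeneous of degree `d`: every word occurring in `x` has degree `d`. -/
def IsHomog (F : Type) [Field F] {n : ℕ}
    (x : MonoidAlgebra F (FreeMonoid (Fin n))) (d : Fin n → ℕ) : Prop :=
  ∀ w ∈ (x.coeff : FreeMonoid (Fin n) →₀ F).support, degw w = d

open Finset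

section

variable {F : Type} [Field F] {n : ℕ}

lemma degw_one : degw (1 : FreeMonoid (Fin n)) = 0 := rfl

lemma degw_mul (u v : FreeMonoid (Fin n)) : degw (u * v) = degw u + degw v := by
  funext k
  simp [degw, List.count_append]

lemma degw_of (k : Fin n) : degw (FreeMonoid.of k) = Pi.single k 1 := by
  funext l
  rcases eq_or_ne l k with rfl | hlk
  · simp [degw]
  · simp [degw, hlk, hlk.symm]

lemma single_one_le_of_ne_zero {k : Fin n} {d : Fin n → ℕ} (h : d k ≠ 0) : Pi.single k 1 ≤ d := by
  intro l
  rcases eq_or_ne l k with rfl | hlk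
  · simpa [Nat.one_le_iff_ne_zero]
  · simp [hlk]

lemma single_add_single_add (i : Fin n) (t : ℕ) (e : Fin n → ℕ) :
    Pi.single i 1 + (Pi.single i t + e) = Pi.single i (t + 1) + e := by
  rw [← add_assoc, ← Pi.single_add, add_comm 1 t]

lemma wordOf_one : wordOf F (1 : FreeMonoid (Fin n)) = 1 :=
  map_one (MonoidAlgebra.of F _)

lemma wordOf_mul (u v : FreeMonoid (Fin n)) :
    wordOf F (u * v) = wordOf F u * wordOf F v :=
  map_mul (MonoidAlgebra.of F _) u v

lemma eq_sum_wordOf (x : MonoidAlgebra F (FreeMonoid (Fin n))) :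
    x = ∑ w ∈ x.coeff.support, x.coeff w • wordOf F w := by
  conv_lhs => rw [← MonoidAlgebra.sum_coeff_single x]
  refine Finset.sum_congr rfl fun w _ => ?_
  rw [wordOf, MonoidAlgebra.of_apply, MonoidAlgebra.smul_single, smul_eq_mul, mul_one]

lemma isHomog_wordOf (w : FreeMonoid (Fin n)) : IsHomog F (wordOf F w) (degw w) := by
  intro u hu
  rw [wordOf, MonoidAlgebra.of_apply, MonoidAlgebra.coeff_single,
    Finsupp.support_single _ one_ne_zero, Finset.mem_singleton] at hu
  rw [hu]

lemma isHomog_zero (d : Fin n → ℕ) : IsHomog F 0 d := by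
  simp [IsHomog]

namespace IsHomog

variable {x y : MonoidAlgebra F (FreeMonoid (Fin n))} {d e : Fin n → ℕ}

lemma smul (c : F) (hx : IsHomog F x d) : IsHomog F (c • x) d :=
  fun w hw => hx w (Finsupp.support_smul hw)

lemma add (hx : IsHomog F x d) (hy : IsHomog F y d) : IsHomog F (x + y) d := by
  classical
  intro w hw
  rcases Finset.mem_union.mp (Finsupp.support_add hw) with h | h
  exacts [hx w h, hy w h]

lemma sub (hx : IsHomog F x d) (hy : IsHomog F y d) : IsHomog F (x - y) d := by
  rw [sub_eq_add_neg, ← neg_one_smul F y]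
  exact hx.add (hy.smul (-1))

lemma mul (hx : IsHomog F x d) (hy : IsHomog F y e) : IsHomog F (x * y) (d + e) := by
  classical
  intro w hw
  obtain ⟨u, hu, v, hv, rfl⟩ := Finset.mem_mul.mp (MonoidAlgebra.support_coeff_mul_subset x y hw)
  rw [degw_mul, hx u hu, hy v hv]

end IsHomog

lemma isHomog_sum {ι : Type*} {s : Finset ι} {f : ι → MonoidAlgebra F (FreeMonoid (Fin n))}
    {d : Fin n → ℕ} (h : ∀ w ∈ s, IsHomog F (f w) d) : IsHomog F (∑ w ∈ s, f w) d := by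
  classical
  induction s using Finset.induction_on with
  | empty => simpa using isHomog_zero d
  | insert _ _ hx ih =>
    rw [Finset.sum_insert hx]
    exact (h _ (mem_insert_self _ _)).add (ih fun w hw => h w (mem_insert_of_mem hw))

def twist (q : Fin n → Fin n → F) (i : Fin n) (d : Fin n → ℕ) : F :=
  ∏ k, (q i k)⁻¹ ^ d k

lemma twist_add (q : Fin n → Fin n → F) (i : Fin n) (d e : Fin n → ℕ) :
    twist q i (d + e) = twist q i d * twist q i e := by
  simp only [twist, Pi.add_apply, pow_add, Finset.prod_mul_distrib]

lemma twist_single (q : Fin n → Fin n → F) (i k : Fin n) (t : ℕ) :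
    twist q i (Pi.single k t) = (q i k)⁻¹ ^ t := by
  rw [twist, Fintype.prod_eq_single k fun l hl => by simp [hl], Pi.single_eq_same]

lemma twist_zero (q : Fin n → Fin n → F) (i : Fin n) : twist q i 0 = 1 := by
  simp [twist]

lemma sum_range_pow_sub_pow_mul {R : Type*} [CommRing R] (a b : R) (t : ℕ) :
    ∑ s ∈ range (t + 1), (a ^ s - a ^ (t - s) * b) = (1 - b) * ∑ s ∈ range (t + 1), a ^ s := by
  have reflect : ∑ s ∈ range (t + 1), a ^ (t - s) = ∑ s ∈ range (t + 1), a ^ s := by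
    simpa using sum_range_reflect (a ^ ·) (t + 1)
  rw [sum_sub_distrib, ← sum_mul, reflect]
  ring

structure IsTwistedDerivation (q : Fin n → Fin n → F) (i : Fin n)
    (D : Module.End F (MonoidAlgebra F (FreeMonoid (Fin n)))) : Prop where
  map_of : ∀ k, D (wordOf F (FreeMonoid.of k)) = if i = k then 1 else 0
  map_mul : ∀ u v d, IsHomog F u d → D (u * v) = D u * v + twist q i d • (u * D v)

def qComm (i : Fin n) (α : F) (v : MonoidAlgebra F (FreeMonoid (Fin n))) :
    MonoidAlgebra F (FreeMonoid (Fin n)) :=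
  α • (wordOf F (FreeMonoid.of i) * v) - v * wordOf F (FreeMonoid.of i)

@[simp]
lemma qComm_zero (i : Fin n) (α : F) :
    qComm i α (0 : MonoidAlgebra F (FreeMonoid (Fin n))) = 0 := by
  simp [qComm]

namespace IsTwistedDerivation

variable {q : Fin n → Fin n → F} {i : Fin n}
  {D : Module.End F (MonoidAlgebra F (FreeMonoid (Fin n)))}
  {v x : MonoidAlgebra F (FreeMonoid (Fin n))} {d e : Fin n → ℕ}

lemma map_one (h : IsTwistedDerivation q i D) : D 1 = 0 := by
  have h1 : IsHomog F (1 : MonoidAlgebra F (FreeMonoid (Fin n))) 0 := by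
    simpa [wordOf_one, degw_one] using isHomog_wordOf (F := F) (1 : FreeMonoid (Fin n))
  have := h.map_mul 1 1 0 h1
  rwa [mul_one, mul_one, one_mul, twist_zero, one_smul, left_eq_add] at this

lemma map_of_mul (h : IsTwistedDerivation q i D) (k : Fin n)
    (v : MonoidAlgebra F (FreeMonoid (Fin n))) :
    D (wordOf F (FreeMonoid.of k) * v) =
      (if i = k then v else 0) + (q i k)⁻¹ • (wordOf F (FreeMonoid.of k) * D v) := by
  rw [h.map_mul _ v _ (isHomog_wordOf _), h.map_of, degw_of, twist_single, pow_one]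
  split_ifs <;> simp

lemma map_mul_of_self (h : IsTwistedDerivation q i D) (hv : IsHomog F v d) :
    D (v * wordOf F (FreeMonoid.of i)) = D v * wordOf F (FreeMonoid.of i) + twist q i d • v := by
  rw [h.map_mul v _ d hv, h.map_of, if_pos rfl, mul_one]

lemma map_wordOf_eq_zero (h : IsTwistedDerivation q i D) {w : FreeMonoid (Fin n)}
    (hw : degw w i = 0) : D (wordOf F w) = 0 := by
  induction w using FreeMonoid.inductionOn' with
  | one => rw [wordOf_one, h.map_one]
  | of_mul k w ih =>
    rw [degw_mul, Pi.add_apply, degw_of, Nat.add_eq_zero_iff] at hw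
    have hik : i ≠ k := by rintro rfl; simp at hw
    rw [wordOf_mul, h.map_of_mul, if_neg hik, ih hw.2, mul_zero, smul_zero, zero_add]

lemma isHomog_map_wordOf (h : IsTwistedDerivation q i D) (w : FreeMonoid (Fin n)) :
    IsHomog F (D (wordOf F w)) (degw w - Pi.single i 1) := by
  induction w using FreeMonoid.inductionOn' with
  | one => rw [wordOf_one, h.map_one]; exact isHomog_zero _
  | of_mul k w ih =>
    have hxD : IsHomog F (wordOf F (FreeMonoid.of k) * D (wordOf F w))
        (Pi.single k 1 + degw w - Pi.single i 1) := by
      by_cases hw : degw w i = 0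
      · rw [h.map_wordOf_eq_zero hw, mul_zero]
        exact isHomog_zero _
      · rw [add_tsub_assoc_of_le (single_one_le_of_ne_zero hw), ← degw_of]
        exact (isHomog_wordOf _).mul ih
    rw [wordOf_mul, h.map_of_mul, degw_mul, degw_of]
    split_ifs with hik
    · subst hik
      rw [add_tsub_cancel_left] at hxD ⊢
      exact (isHomog_wordOf w).add (hxD.smul _)
    · rw [zero_add]
      exact hxD.smul _

lemma isHomog_map (h : IsTwistedDerivation q i D) (hx : IsHomog F x d) :
    IsHomog F (D x) (d - Pi.single i 1) := by
  rw [eq_sum_wordOf x, map_sum]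
  refine isHomog_sum fun w hw => ?_
  rw [map_smul, ← hx w hw]
  exact (h.isHomog_map_wordOf w).smul _

lemma map_eq_zero_of_isHomog (h : IsTwistedDerivation q i D) (hx : IsHomog F x d) (hd : d i = 0) :
    D x = 0 := by
  rw [eq_sum_wordOf x, map_sum]
  refine Finset.sum_eq_zero fun w hw => ?_
  rw [map_smul, h.map_wordOf_eq_zero (by rw [hx w hw]; exact hd), smul_zero]

lemma isHomog_pow_apply (h : IsTwistedDerivation q i D) (r t : ℕ)
    (hv : IsHomog F v (Pi.single i (r + t) + e)) : IsHomog F ((D ^ r) v) (Pi.single i t + e) := by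
  induction r generalizing t with
  | zero => simpa using hv
  | succ r ih =>
    rw [pow_succ', Module.End.mul_apply]
    have := h.isHomog_map (ih (t + 1) (by rwa [← add_assoc, add_right_comm]))
    rwa [← single_add_single_add, add_tsub_cancel_left] at this

lemma pow_succ_apply_eq_zero (h : IsTwistedDerivation q i D) {t : ℕ}
    (hv : IsHomog F v (Pi.single i t + e)) (he : e i = 0) : (D ^ (t + 1)) v = 0 := by
  rw [pow_succ', Module.End.mul_apply]
  exact h.map_eq_zero_of_isHomog (h.isHomog_pow_apply t 0 (by simpa using hv)) (by simpa using he)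

lemma map_qComm (h : IsTwistedDerivation q i D) (hv : IsHomog F v d) (α : F) :
    D (qComm i α v) = (α - twist q i d) • v + qComm i (α * (q i i)⁻¹) (D v) := by
  rw [qComm, qComm, map_sub, map_smul, h.map_of_mul, if_pos rfl, h.map_mul_of_self hv, smul_add,
    smul_smul, sub_smul]
  abel

lemma pow_succ_map_qComm (h : IsTwistedDerivation q i D) {t : ℕ}
    (hv : IsHomog F v (Pi.single i t + e)) {r : ℕ} (hr : r ≤ t) :
    (D ^ (r + 1)) (qComm i 1 v) =
      (∑ s ∈ range (r + 1), ((q i i)⁻¹ ^ s - (q i i)⁻¹ ^ (t - s) * twist q i e)) • (D ^ r) v +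
        qComm i ((q i i)⁻¹ ^ (r + 1)) ((D ^ (r + 1)) v) := by
  induction r with
  | zero => simpa [twist_add, twist_single] using h.map_qComm hv 1
  | succ r ih =>
    have hDv : IsHomog F ((D ^ (r + 1)) v) (Pi.single i (t - (r + 1)) + e) :=
      h.isHomog_pow_apply _ _ (by rwa [Nat.add_sub_cancel' hr])
    rw [pow_succ' D (r + 1), Module.End.mul_apply, ih (by omega), map_add, map_smul,
      h.map_qComm hDv, twist_add, twist_single, ← pow_succ, ← Module.End.mul_apply, ← pow_succ',
      ← Module.End.mul_apply, ← pow_succ', sum_range_succ _ (r + 1), add_smul]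
    abel

end IsTwistedDerivation

section IteratedCommutator

variable {i j : Fin n} {L : ℕ → MonoidAlgebra F (FreeMonoid (Fin n))}

lemma isHomog_iteratedCommutator (hL0 : L 0 = wordOf F (FreeMonoid.of j))
    (hLs : ∀ m : ℕ, L (m + 1) =
      wordOf F (FreeMonoid.of i) * L m - L m * wordOf F (FreeMonoid.of i)) (t : ℕ) :
    IsHomog F (L t) (Pi.single i t + Pi.single j 1) := by
  have hxi := isHomog_wordOf (F := F) (FreeMonoid.of i)
  rw [degw_of] at hxi
  induction t with
  | zero => simpa [hL0, ← degw_of] using isHomog_wordOf (F := F) (FreeMonoid.of j)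
  | succ t ih =>
    rw [hLs, ← single_add_single_add]
    refine (hxi.mul ih).sub ?_
    rw [add_comm]
    exact ih.mul hxi

lemma IsTwistedDerivation.pow_succ_apply_iteratedCommutator {q : Fin n → Fin n → F}
    {D : Module.End F (MonoidAlgebra F (FreeMonoid (Fin n)))} (h : IsTwistedDerivation q i D)
    (hij : i ≠ j) (hL0 : L 0 = wordOf F (FreeMonoid.of j))
    (hLs : ∀ m : ℕ, L (m + 1) =
      wordOf F (FreeMonoid.of i) * L m - L m * wordOf F (FreeMonoid.of i)) (t : ℕ) :
    (D ^ (t + 1)) (L (t + 1)) =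
      ((1 - (q i j)⁻¹) * ∑ s ∈ range (t + 1), (q i i)⁻¹ ^ s) • (D ^ t) (L t) := by
  have hv := isHomog_iteratedCommutator hL0 hLs t
  have hL : L (t + 1) = qComm i 1 (L t) := by rw [hLs, qComm, one_smul]
  rw [hL, h.pow_succ_map_qComm hv le_rfl, h.pow_succ_apply_eq_zero hv (Pi.single_eq_of_ne hij 1),
    qComm_zero, add_zero, twist_single, pow_one, sum_range_pow_sub_pow_mul]

end IteratedCommutator

end

theorem stmt_2_general (F : Type) [Field F] (n : ℕ)
    (q : Fin n → Fin n → F)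
    (D : Fin n → Module.End F (MonoidAlgebra F (FreeMonoid (Fin n))))
    (hDx : ∀ i k : Fin n, D i (wordOf F (FreeMonoid.of k)) = if i = k then 1 else 0)
    (hDmul : ∀ (i : Fin n) (u v : MonoidAlgebra F (FreeMonoid (Fin n))) (d : Fin n → ℕ),
      IsHomog F u d →
      D i (u * v) = D i u * v + (∏ k : Fin n, (q i k)⁻¹ ^ d k) • (u * D i v))
    (i j : Fin n) (hij : i ≠ j)
    (L : ℕ → MonoidAlgebra F (FreeMonoid (Fin n)))
    (hL0 : L 0 = wordOf F (FreeMonoid.of j))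
    (hLs : ∀ m : ℕ, L (m + 1) =
      wordOf F (FreeMonoid.of i) * L m - L m * wordOf F (FreeMonoid.of i))
    (m : ℕ) :
    (D i ^ m) (L m) =
      ((1 - (q i j)⁻¹) ^ m *
          ∏ t ∈ Finset.range m, ∑ l ∈ Finset.range (t + 1), (q i i)⁻¹ ^ l) •
        wordOf F (FreeMonoid.of j) := by
  have hD : IsTwistedDerivation q i (D i) := ⟨hDx i, hDmul i⟩
  induction m with
  | zero => simp [hL0]
  | succ m ih =>
    rw [hD.pow_succ_apply_iteratedCommutator hij hL0 hLs, ih, smul_smul, prod_range_succ]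
    congr 1
    ring

/-- `∂_i^m(L_m) = (1 − b)^m (m)_a! x_j` for `m ≥ 1`, where
`a = q_{ii}⁻¹`, `b = q_{ij}⁻¹`, `(t)_a = 1 + a + ⋯ + a^{t−1}`, `(m)_a! = ∏_{t=1}^m (t)_a`,
`L_0 = x_j` and `L_m = x_i L_{m−1} − L_{m−1} x_i`. -/
theorem stmt_2 (F : Type) [Field F] [CharZero F] (n : ℕ) (hn : 2 ≤ n)
    (q : Fin n → Fin n → F) (hq : ∀ k l, q k l ≠ 0)
    (D : Fin n → Module.End F (MonoidAlgebra F (FreeMonoid (Fin n))))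
    (hD1 : ∀ i, D i 1 = 0)
    (hDx : ∀ i k : Fin n, D i (wordOf F (FreeMonoid.of k)) = if i = k then 1 else 0)
    (hDmul : ∀ (i : Fin n) (u v : MonoidAlgebra F (FreeMonoid (Fin n))) (d : Fin n → ℕ),
      IsHomog F u d →
      D i (u * v) = D i u * v + (∏ k : Fin n, (q i k)⁻¹ ^ d k) • (u * D i v))
    (i j : Fin n) (hij : i ≠ j)
    (L : ℕ → MonoidAlgebra F (FreeMonoid (Fin n)))
    (hL0 : L 0 = wordOf F (FreeMonoid.of j))
    (hLs : ∀ m : ℕ, L (m + 1) =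
      wordOf F (FreeMonoid.of i) * L m - L m * wordOf F (FreeMonoid.of i))
    (m : ℕ) (hm : 1 ≤ m) :
    (D i ^ m) (L m) =
      ((1 - (q i j)⁻¹) ^ m *
          ∏ t ∈ Finset.range m, ∑ l ∈ Finset.range (t + 1), (q i i)⁻¹ ^ l) •
        wordOf F (FreeMonoid.of j) :=
  stmt_2_general F n q D hDx hDmul i j hij L hL0 hLs m

end
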